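/- arXiv:2210.14629 — 4 statements merged into one kernel-verified Lean document; each statement's English description precedes it below -/
import Mathlib

section
/- Let G be a finite simple 3-connected graph and let 𝒯 be a tangle of order at least 4 in G. Then for every two distinct maximal 𝒯-predongles D₁ and D₂ of G, we have D₁ ∩ D₂ = ∅ and, furthermore, there is at most one edge of G with one endpoint in D₁ and the other endpoint in D₂. -/
/-- A separation of a graph `G`: a pair of vertex sets `(A, B)` with `A ∪ B = V(G)` such
that no edge of `G` has one endpoint in `A \ B` and the other in `B \ A`. -/
def IsSeparation {V : Type*} (G : SimpleGraph V) (A B : Set V) : Prop :=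
  A ∪ B = Set.univ ∧ ∀ ⦃u v : V⦄, G.Adj u v → u ∈ A \ B → v ∉ B \ A

/-- A tangle of order `k` in the graph `G`. -/
def IsTangle {V : Type*} (G : SimpleGraph V) (k : ℕ) (T : Set (Set V × Set V)) : Prop :=
  (∀ p ∈ T, IsSeparation G p.1 p.2 ∧ (p.1 ∩ p.2).ncard < k) ∧
  (∀ A B : Set V, IsSeparation G A B → (A ∩ B).ncard < k → (A, B) ∈ T ∨ (B, A) ∈ T) ∧
  (∀ p₁ ∈ T, ∀ p₂ ∈ T, ∀ p₃ ∈ T,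
    p₁.1 ∪ p₂.1 ∪ p₃.1 ≠ (Set.univ : Set V))

/-- `G` is 3-connected: it has at least 4 vertices and deleting any set of at most 2
vertices leaves it connected. -/
def ThreeConnected {V : Type*} (G : SimpleGraph V) : Prop :=
  4 ≤ Nat.card V ∧ ∀ S : Set V, S.ncard ≤ 2 → (G.induce Sᶜ).Connected

/-- The open neighborhood `N(D)` of a vertex set `D`: vertices outside `D` with a
neighbor in `D`. -/
def setNbhd {V : Type*} (G : SimpleGraph V) (D : Set V) : Set V :=
  {v | v ∉ D ∧ ∃ u ∈ D, G.Adj u v}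

/-- A `T`-predongle: a set `D` with `|N(D)| ≤ 3` and `(N[D], V(G) ∖ D) ∈ T`. -/
def IsPredongle {V : Type*} (G : SimpleGraph V) (T : Set (Set V × Set V)) (D : Set V) :
    Prop :=
  (setNbhd G D).ncard ≤ 3 ∧ (D ∪ setNbhd G D, Dᶜ) ∈ T

/-- A maximal `T`-predongle: inclusion-wise maximal among `T`-predongles. -/
def IsMaxPredongle {V : Type*} (G : SimpleGraph V) (T : Set (Set V × Set V)) (D : Set V) :
    Prop :=
  IsPredongle G T D ∧ ∀ D' : Set V, IsPredongle G T D' → D ⊆ D' → D = D'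

section Aux
variable {V : Type*} [Fintype V] {G : SimpleGraph V} {k : ℕ} {T : Set (Set V × Set V)}

lemma sep_pred (D : Set V) : IsSeparation G (D ∪ setNbhd G D) Dᶜ := by
  constructor
  · ext x; simp only [Set.mem_union, Set.mem_compl_iff, Set.mem_univ, iff_true]
    tauto
  · rintro u v huv ⟨hu1, hu2⟩ ⟨hv1, hv2⟩
    simp only [Set.mem_compl_iff, not_not] at hu2 hv1
    exact hv2 (Or.inr ⟨hv1, u, hu2, huv⟩)

lemma inter_pred (D : Set V) : (D ∪ setNbhd G D) ∩ Dᶜ = setNbhd G D := by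
  ext x
  simp only [Set.mem_inter_iff, Set.mem_union, Set.mem_compl_iff, setNbhd, Set.mem_setOf_eq]
  tauto

lemma setNbhd_union_subset (D₁ D₂ : Set V) :
    setNbhd G (D₁ ∪ D₂) ⊆ setNbhd G D₁ ∪ setNbhd G D₂ := by
  rintro v ⟨hv, u, hu, huv⟩
  rw [Set.mem_union] at hu
  simp only [Set.mem_union] at hv
  push_neg at hv
  rcases hu with h | h
  · exact Or.inl ⟨hv.1, u, h, huv⟩
  · exact Or.inr ⟨hv.2, u, h, huv⟩

lemma fst_ne_univ (hT : IsTangle G k T) {p : Set V × Set V} (hp : p ∈ T) :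
    p.1 ≠ Set.univ := by
  intro h
  refine hT.2.2 p hp p hp p hp ?_
  rw [h]; simp

/-- If the union of two predongle bases has small neighborhood, it is a predongle. -/
lemma isPredongle_union (hk : 4 ≤ k) (hT : IsTangle G k T) {D₁ D₂ : Set V}
    (h₁ : (D₁ ∪ setNbhd G D₁, D₁ᶜ) ∈ T) (h₂ : (D₂ ∪ setNbhd G D₂, D₂ᶜ) ∈ T)
    (hcard : (setNbhd G (D₁ ∪ D₂)).ncard ≤ 3) :
    IsPredongle G T (D₁ ∪ D₂) := by
  set D := D₁ ∪ D₂
  refine ⟨hcard, ?_⟩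
  have hord : ((D ∪ setNbhd G D) ∩ Dᶜ).ncard < k := by
    rw [inter_pred]; omega
  rcases hT.2.1 _ _ (sep_pred D) hord with h | h
  · exact h
  · exfalso
    refine hT.2.2 _ h₁ _ h₂ _ h ?_
    ext x
    simp only [Set.mem_union, Set.mem_compl_iff, Set.mem_univ, iff_true, D]
    by_cases hx1 : x ∈ D₁
    · exact Or.inl (Or.inl (Or.inl hx1))
    by_cases hx2 : x ∈ D₂
    · exact Or.inl (Or.inr (Or.inl hx2))
    · exact Or.inr (by push_neg; exact ⟨hx1, hx2⟩)

lemma not_isPredongle_union {D₁ D₂ : Set V}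
    (h₁ : IsMaxPredongle G T D₁) (h₂ : IsMaxPredongle G T D₂) (hne : D₁ ≠ D₂) :
    ¬ IsPredongle G T (D₁ ∪ D₂) := by
  intro hp
  have e1 := h₁.2 _ hp Set.subset_union_left
  have hsub : D₂ ⊆ D₁ := by rw [e1]; exact Set.subset_union_right
  exact hne (h₂.2 _ h₁.1 hsub).symm

/-- In a 3-connected graph, a nonempty set whose closed neighborhood is not everything
has at least 3 boundary vertices. -/
lemma three_le_ncard_setNbhd (hG : ThreeConnected G) {D : Set V} (hD : D.Nonempty)
    (hco : D ∪ setNbhd G D ≠ Set.univ) : 3 ≤ (setNbhd G D).ncard := by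
  by_contra hlt
  push_neg at hlt
  set S := setNbhd G D with hS
  have hconn := hG.2 S (by omega)
  obtain ⟨u, hu⟩ := hD
  obtain ⟨w, hw⟩ : ∃ w, w ∉ D ∪ setNbhd G D := by
    by_contra h; push_neg at h
    exact hco (Set.eq_univ_of_forall h)
  simp only [Set.mem_union] at hw
  push_neg at hw
  have huS : u ∈ Sᶜ := fun h => h.1 hu
  have hwS : w ∈ Sᶜ := hw.2
  obtain ⟨p⟩ := hconn.preconnected ⟨u, huS⟩ ⟨w, hwS⟩
  have key : ∀ (a b : (Sᶜ : Set V)), (G.induce Sᶜ).Walk a b → (a : V) ∈ D → (b : V) ∈ D := by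
    intro a b p
    induction p with
    | nil => exact id
    | @cons a c b h q ih =>
      intro ha
      apply ih
      by_contra hc
      have hadj : G.Adj (a : V) (c : V) := h
      exact c.2 ⟨hc, a, ha, hadj⟩
  exact hw.1 (key _ _ p hu)

lemma card_bound_aux {D₁ D₂ : Set V}
    (h1 : (setNbhd G D₁).ncard ≤ 3) (h2 : (setNbhd G D₂).ncard ≤ 3) {a b c : V}
    (hab : a ≠ b) (hac : a ≠ c) (hbc : b ≠ c)
    (haN : a ∈ setNbhd G D₁ ∪ setNbhd G D₂) (haD : a ∈ D₁ ∪ D₂)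
    (hbN : b ∈ setNbhd G D₁ ∪ setNbhd G D₂) (hbD : b ∈ D₁ ∪ D₂)
    (hcN : c ∈ setNbhd G D₁ ∪ setNbhd G D₂) (hcD : c ∈ D₁ ∪ D₂) :
    (setNbhd G (D₁ ∪ D₂)).ncard ≤ 3 := by
  set N := setNbhd G D₁ ∪ setNbhd G D₂ with hN
  set S : Set V := {a, b, c} with hSdef
  have hScard : S.ncard = 3 := by
    rw [hSdef, Set.ncard_insert_of_notMem (by simp [hab, hac]),
      Set.ncard_insert_of_notMem (by simp [hbc]), Set.ncard_singleton]
  have hSN : S ⊆ N := by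
    rintro x hx
    rcases hx with h | h | h <;> subst h <;> assumption
  have hsub : setNbhd G (D₁ ∪ D₂) ⊆ N \ S := by
    intro v hv
    refine ⟨setNbhd_union_subset _ _ hv, ?_⟩
    rintro (h | h | h) <;> subst h <;> exact hv.1 (by assumption)
  have hNcard : N.ncard ≤ 6 := le_trans (Set.ncard_union_le _ _) (by omega)
  have := Set.ncard_le_ncard hsub (Set.toFinite _)
  rw [Set.ncard_diff hSN] at this
  omega

end Aux

/-- Two distinct maximal `T`-predongles in a 3-connected graph are disjoint and joined
by at most one edge. -/
theorem maxPredongles_disjoint_few_edges {V : Type*} [Fintype V] (G : SimpleGraph V)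
    (hG : ThreeConnected G) (k : ℕ) (hk : 4 ≤ k) (T : Set (Set V × Set V))
    (hT : IsTangle G k T) (D₁ D₂ : Set V)
    (h₁ : IsMaxPredongle G T D₁) (h₂ : IsMaxPredongle G T D₂) (hne : D₁ ≠ D₂) :
    D₁ ∩ D₂ = ∅ ∧
      {e : Sym2 V | e ∈ G.edgeSet ∧ ∃ u ∈ D₁, ∃ v ∈ D₂, e = s(u, v)}.ncard ≤ 1 := by
  have hN1 : (setNbhd G D₁).ncard ≤ 3 := h₁.1.1
  have hN2 : (setNbhd G D₂).ncard ≤ 3 := h₂.1.1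
  have hnotU := not_isPredongle_union h₁ h₂ hne
  -- Part 1: disjointness
  have hdisj : D₁ ∩ D₂ = ∅ := by
    by_contra hni
    obtain ⟨x, hx⟩ := Set.nonempty_iff_ne_empty.mpr hni
    apply hnotU
    apply isPredongle_union hk hT h₁.1.2 h₂.1.2
    -- submodularity-type bound
    set A := setNbhd G (D₁ ∪ D₂) with hA
    set B := setNbhd G (D₁ ∩ D₂) with hB
    set N₁ := setNbhd G D₁
    set N₂ := setNbhd G D₂
    have hUn : A ∪ B ⊆ N₁ ∪ N₂ := by
      rintro v (hv | hv)
      · exact setNbhd_union_subset _ _ hv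
      · obtain ⟨hv1, u, hu, huv⟩ := hv
        simp only [Set.mem_inter_iff, not_and_or] at hv1
        rcases hv1 with h | h
        · exact Or.inl ⟨h, u, hu.1, huv⟩
        · exact Or.inr ⟨h, u, hu.2, huv⟩
    have hIn : A ∩ B ⊆ N₁ ∩ N₂ := by
      rintro v ⟨hvA, hvB⟩
      obtain ⟨hv1, -⟩ := hvA
      simp only [Set.mem_union, not_or] at hv1
      obtain ⟨-, u, hu, huv⟩ := hvB
      exact ⟨⟨hv1.1, u, hu.1, huv⟩, ⟨hv1.2, u, hu.2, huv⟩⟩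
    have e1 := Set.ncard_union_add_ncard_inter A B
    have e2 := Set.ncard_union_add_ncard_inter N₁ N₂
    have l1 := Set.ncard_le_ncard hUn (Set.toFinite _)
    have l2 := Set.ncard_le_ncard hIn (Set.toFinite _)
    have hB3 : 3 ≤ B.ncard := by
      apply three_le_ncard_setNbhd hG ⟨x, hx⟩
      intro hu
      apply fst_ne_univ hT h₁.1.2
      apply Set.eq_univ_of_univ_subset
      rw [← hu]
      apply Set.union_subset
      · exact (Set.inter_subset_left).trans Set.subset_union_left
      · rintro v ⟨hv1, u, hu, huv⟩
        by_cases hvD : v ∈ D₁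
        · exact Or.inl hvD
        · exact Or.inr ⟨hvD, u, hu.1, huv⟩
    omega
  refine ⟨hdisj, ?_⟩
  have hmem : ∀ y, y ∈ D₁ → y ∉ D₂ := fun y hy h =>
    Set.eq_empty_iff_forall_notMem.mp hdisj y ⟨hy, h⟩
  -- Part 2: at most one edge
  by_contra hE
  push_neg at hE
  rw [Set.one_lt_ncard (Set.toFinite _)] at hE
  obtain ⟨e₁, ⟨he₁, u₁, hu₁, v₁, hv₁, rfl⟩, e₂, ⟨he₂, u₂, hu₂, v₂, hv₂, rfl⟩, hee⟩ := hE
  rw [SimpleGraph.mem_edgeSet] at he₁ he₂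
  have hu₁₂ : u₁ ∉ D₂ := hmem _ hu₁
  have hu₂₂ : u₂ ∉ D₂ := hmem _ hu₂
  have hv₁₁ : v₁ ∉ D₁ := fun h => hmem _ h hv₁
  have hv₂₁ : v₂ ∉ D₁ := fun h => hmem _ h hv₂
  have hu₁N : u₁ ∈ setNbhd G D₂ := ⟨hu₁₂, v₁, hv₁, he₁.symm⟩
  have hu₂N : u₂ ∈ setNbhd G D₂ := ⟨hu₂₂, v₂, hv₂, he₂.symm⟩
  have hv₁N : v₁ ∈ setNbhd G D₁ := ⟨hv₁₁, u₁, hu₁, he₁⟩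
  have hv₂N : v₂ ∈ setNbhd G D₁ := ⟨hv₂₁, u₂, hu₂, he₂⟩
  have hcases : u₁ ≠ u₂ ∨ v₁ ≠ v₂ := by
    by_contra h
    push_neg at h
    exact hee (by rw [h.1, h.2])
  apply hnotU
  apply isPredongle_union hk hT h₁.1.2 h₂.1.2
  rcases hcases with h | h
  · exact card_bound_aux hN1 hN2 h (fun he => hv₁₁ (show v₁ ∈ D₁ by rw [← he]; exact hu₁)) (fun he => hv₁₁ (show v₁ ∈ D₁ by rw [← he]; exact hu₂))
      (Or.inr hu₁N) (Or.inl hu₁) (Or.inr hu₂N) (Or.inl hu₂) (Or.inl hv₁N) (Or.inr hv₁)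
  · exact card_bound_aux hN1 hN2 (fun he => hv₁₁ (show v₁ ∈ D₁ by rw [← he]; exact hu₁)) (fun he => hv₂₁ (show v₂ ∈ D₁ by rw [← he]; exact hu₁)) h
      (Or.inr hu₁N) (Or.inl hu₁) (Or.inl hv₁N) (Or.inr hv₁) (Or.inl hv₂N) (Or.inr hv₂)
end

section
/- For all integers k ≥ 1 and ℓ ≥ 0 with 10ℓ ≤ k, the 1-subdivision of the elementary cylindrical wall of height k and width k is (100ℓ², ℓ)-unbreakable. -/
/-- `G` is `(q,k)`-unbreakable: every separation of order at most `k` has a side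
of size at most `q`. -/
def Unbreakable {V : Type*} (G : SimpleGraph V) (q k : ℕ) : Prop :=
  ∀ A B : Set V, IsSeparation G A B → (A ∩ B).ncard ≤ k → A.ncard ≤ q ∨ B.ncard ≤ q

/-- The elementary cylindrical wall of height `h` and width `w`, on vertices
`(i, j)` (`0`-indexed rows `i`, columns `j`): each row is a cycle on `2w` vertices
(consecutive columns plus the wrap-around edge), and there is a vertical edge between
rows `i` and `i+1` in column `j` exactly when `i` and `j` have the same parity
(which corresponds to edges `v_{i,2j-1}v_{i+1,2j-1}` for odd rows and
`v_{i,2j}v_{i+1,2j}` for even rows in the 1-indexed description). -/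
def cylWall (h w : ℕ) : SimpleGraph (Fin h × Fin (2 * w)) :=
  SimpleGraph.fromRel (fun a b =>
    (a.1 = b.1 ∧ (b.2 : ℕ) = (a.2 : ℕ) + 1) ∨
    (a.1 = b.1 ∧ (a.2 : ℕ) = 2 * w - 1 ∧ (b.2 : ℕ) = 0) ∨
    ((b.1 : ℕ) = (a.1 : ℕ) + 1 ∧ a.2 = b.2 ∧ (a.1 : ℕ) % 2 = (a.2 : ℕ) % 2))

/-- The 1-subdivision of `G`: vertex set `V(G) ⊎ E(G)`, where a vertex `v` of `G` is
adjacent to an edge `e` of `G` if and only if `v` is an endpoint of `e`. -/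
def OneSubdivision {V : Type*} (G : SimpleGraph V) : SimpleGraph (V ⊕ ↥G.edgeSet) :=
  SimpleGraph.fromRel (fun a b =>
    match a, b with
    | Sum.inl v, Sum.inr e => v ∈ (e : Sym2 V)
    | _, _ => False)

theorem Set.ncard_biUnion_le_mul {ι α : Type*} {t : Set ι} (ht : t.Finite) {s : ι → Set α}
    {d : ℕ} (hs : ∀ i ∈ t, (s i).ncard ≤ d) : (⋃ i ∈ t, s i).ncard ≤ d * t.ncard := by
  lift t to Finset ι using ht
  simpa [mul_comm] using
    (Finset.set_ncard_biUnion_le t s).trans (Finset.sum_le_card_nsmul _ _ _ hs)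

theorem exists_forall_ne_of_ncard_lt {α β : Type*} [Finite α] (f : α → β) {Z : Set α}
    {t : Set β} (hZ : Z.ncard < t.ncard) : ∃ b ∈ t, ∀ z ∈ Z, f z ≠ b := by
  obtain ⟨b, hbt, hb⟩ :=
    Set.exists_mem_notMem_of_ncard_lt_ncard ((Set.ncard_image_le (f := f)).trans_lt hZ)
  exact ⟨b, hbt, fun z hz hzb => hb ⟨z, hz, hzb⟩⟩

namespace SimpleGraph

variable {V : Type*} (G : SimpleGraph V)

/-- `G - S`, with the vertices of `S` kept as isolated vertices. -/
def avoiding (S : Set V) : SimpleGraph V where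
  Adj u v := G.Adj u v ∧ u ∉ S ∧ v ∉ S
  symm := ⟨fun _ _ h => ⟨h.1.symm, h.2.2, h.2.1⟩⟩
  loopless := ⟨fun _ h => G.irrefl h.1⟩

variable {G}

@[simp]
theorem avoiding_adj {S : Set V} {u v : V} :
    (G.avoiding S).Adj u v ↔ G.Adj u v ∧ u ∉ S ∧ v ∉ S := Iff.rfl

theorem Adj.reachable_avoiding {S : Set V} {u v : V} (h : G.Adj u v) (hu : u ∉ S) (hv : v ∉ S) :
    (G.avoiding S).Reachable u v :=
  (avoiding_adj.2 ⟨h, hu, hv⟩).reachable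

theorem reachable_of_reachable_succ {N : ℕ} (f : Fin N → V)
    (hf : ∀ (n : ℕ) (hn : n + 1 < N), G.Reachable (f ⟨n, by omega⟩) (f ⟨n + 1, hn⟩))
    (m n : Fin N) : G.Reachable (f m) (f n) := by
  suffices h : ∀ n : Fin N, G.Reachable (f ⟨0, m.pos⟩) (f n) from (h m).symm.trans (h n)
  rintro ⟨n, hn⟩
  induction n with
  | zero => rfl
  | succ n ih => exact (ih (by omega)).trans (hf n hn)

end SimpleGraph

open SimpleGraph

theorem IsSeparation.mem_sdiff_of_reachable {V : Type*} {G : SimpleGraph V} {A B : Set V}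
    (hsep : IsSeparation G A B) {a b : V} (ha : a ∈ A \ B)
    (hab : (G.avoiding (A ∩ B)).Reachable a b) : b ∈ A \ B := by
  rw [reachable_iff_reflTransGen] at hab
  induction hab with
  | refl => exact ha
  | @tail x y _ hxy ih =>
    obtain ⟨hadj, -, hy⟩ := hxy
    have hy_notMem : y ∉ B \ A := hsep.2 hadj ih
    have hy_mem : y ∈ A ∪ B := hsep.1 ▸ Set.mem_univ y
    simp only [Set.mem_union, Set.mem_inter_iff, Set.mem_sdiff] at hy hy_notMem hy_mem ⊢
    tauto

theorem unbreakable_of_reachable_outside {V : Type*} [Finite V] {G : SimpleGraph V} {q k : ℕ}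
    (h : ∀ S : Set V, S.ncard ≤ k →
      ∃ X : Set V, X.ncard + k ≤ q ∧ ∀ a ∉ X, ∀ b ∉ X, (G.avoiding S).Reachable a b) :
    Unbreakable G q k := by
  intro A B hsep hAB
  by_contra! hbig
  obtain ⟨X, hX, hreach⟩ := h (A ∩ B) hAB
  have hout : ∀ C D : Set V, (C ∩ D).ncard ≤ k → q < C.ncard → ∃ c ∈ C \ D, c ∉ X := by
    intro C D hCD hC
    refine Set.not_subset.1 fun hsub => ?_
    have := Set.ncard_le_ncard hsub
    have := Set.ncard_inter_add_ncard_sdiff_eq_ncard C D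
    omega
  obtain ⟨a, ha, haX⟩ := hout A B hAB hbig.1
  obtain ⟨b, hb, hbX⟩ := hout B A (by rwa [Set.inter_comm]) hbig.2
  exact hb.2 (hsep.mem_sdiff_of_reachable ha (hreach a haX b hbX)).1

namespace OneSubdivision

variable {V : Type*} {G : SimpleGraph V}

theorem adj_inl_inr {u : V} {e : G.edgeSet} :
    (OneSubdivision G).Adj (.inl u) (.inr e) ↔ u ∈ (e : Sym2 V) := by
  simp [OneSubdivision, SimpleGraph.fromRel_adj]

variable (G) in
def ends : V ⊕ G.edgeSet → Set V
  | .inl u => {u}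
  | .inr e => {u | u ∈ (e : Sym2 V)}

variable (G) in
def shadow (S : Set (V ⊕ G.edgeSet)) : Set V := ⋃ v ∈ S, ends G v

theorem ends_nonempty (v : V ⊕ G.edgeSet) : (ends G v).Nonempty := by
  rcases v with u | ⟨e, he⟩
  · exact ⟨u, rfl⟩
  · induction e using Sym2.ind with
    | _ a b => exact ⟨a, Sym2.mem_mk_left a b⟩

theorem ncard_ends_le (v : V ⊕ G.edgeSet) : (ends G v).ncard ≤ 2 := by
  rcases v with u | ⟨e, he⟩
  · simp [ends]
  · induction e using Sym2.ind with
    | _ a b =>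
      have : ends G (.inr ⟨s(a, b), he⟩) = {a, b} := by ext; simp [ends]
      rw [this]
      exact (Set.ncard_insert_le a {b}).trans (by simp)

theorem ncard_shadow_le {S : Set (V ⊕ G.edgeSet)} (hS : S.Finite) :
    (shadow G S).ncard ≤ 2 * S.ncard :=
  Set.ncard_biUnion_le_mul hS fun v _ => ncard_ends_le v

variable {S : Set (V ⊕ G.edgeSet)}

theorem notMem_of_mem_ends {v : V ⊕ G.edgeSet} {u : V} (hu : u ∈ ends G v)
    (huS : u ∉ shadow G S) : v ∉ S :=
  fun hv => huS (Set.mem_biUnion hv hu)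

theorem reachable_inl_of_mem_ends {v : V ⊕ G.edgeSet} {u : V} (hu : u ∈ ends G v)
    (huS : u ∉ shadow G S) : ((OneSubdivision G).avoiding S).Reachable v (.inl u) := by
  rcases v with w | e
  · obtain rfl : u = w := hu
    rfl
  · exact (adj_inl_inr.2 hu).symm.reachable_avoiding (notMem_of_mem_ends hu huS)
      (notMem_of_mem_ends rfl huS)

theorem reachable_inl_inl {u w : V} (h : (G.avoiding (shadow G S)).Reachable u w) :
    ((OneSubdivision G).avoiding S).Reachable (.inl u) (.inl w) := by
  rw [reachable_iff_reflTransGen] at h ⊢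
  refine Relation.ReflTransGen.lift' Sum.inl (fun x y hxy => ?_) _ _ h
  obtain ⟨hadj, hx, hy⟩ := hxy
  rw [Function.onFun, ← reachable_iff_reflTransGen]
  have hxe : x ∈ ends G (.inr ⟨s(x, y), hadj⟩) := Sym2.mem_mk_left x y
  exact (reachable_inl_of_mem_ends hxe hx).symm.trans
    (reachable_inl_of_mem_ends (Sym2.mem_mk_right x y) hy)

theorem ncard_setOf_exists_mem_ends_le [Finite V] {d : ℕ}
    (hd : ∀ u, (G.neighborSet u).ncard ≤ d) (X : Set V) :
    {v | ∃ u ∈ ends G v, u ∈ X}.ncard ≤ (d + 1) * X.ncard := by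
  classical
  have hfiber : ∀ u, {v | u ∈ ends G v}.ncard ≤ d + 1 := by
    intro u
    have hsub : {v | u ∈ ends G v} ⊆ insert (.inl u) (.inr '' {e | u ∈ (e : Sym2 V)}) := by
      rintro (w | e) h
      · exact .inl (congrArg Sum.inl h.symm)
      · exact .inr ⟨e, h, rfl⟩
    calc {v | u ∈ ends G v}.ncard
        ≤ (insert (.inl u) (.inr '' {e : G.edgeSet | u ∈ (e : Sym2 V)})).ncard :=
          Set.ncard_le_ncard hsub
      _ ≤ {e : G.edgeSet | u ∈ (e : Sym2 V)}.ncard + 1 := by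
          grw [Set.ncard_insert_le, Set.ncard_image_of_injective _ Sum.inr_injective]
      _ ≤ (G.incidenceSet u).ncard + 1 := by
          gcongr
          exact Set.ncard_le_ncard_of_injOn Subtype.val (fun e he => ⟨e.2, he⟩)
            Subtype.val_injective.injOn
      _ ≤ d + 1 := by
          rw [Set.ncard_congr' (G.incidenceSetEquivNeighborSet u)]
          exact Nat.succ_le_succ (hd u)
  have hunion : {v | ∃ u ∈ ends G v, u ∈ X} = ⋃ u ∈ X, {v | u ∈ ends G v} := by
    ext; simp [and_comm]
  rw [hunion]
  exact Set.ncard_biUnion_le_mul X.toFinite fun u _ => hfiber u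

end OneSubdivision

namespace cylWall

open OneSubdivision

variable {h w : ℕ}

theorem adj_cases {a b : Fin h × Fin (2 * w)} (hab : (cylWall h w).Adj a b) :
    (a.1 = b.1 ∧ ((b.2 : ℕ) = a.2 + 1 ∨ (a.2 : ℕ) = b.2 + 1 ∨
      ((a.2 : ℕ) = 2 * w - 1 ∧ (b.2 : ℕ) = 0) ∨ ((b.2 : ℕ) = 2 * w - 1 ∧ (a.2 : ℕ) = 0))) ∨
    (a.2 = b.2 ∧ ((b.1 : ℕ) = a.1 + 1 ∨ (a.1 : ℕ) = b.1 + 1)) := by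
  obtain ⟨-, h | h⟩ := hab <;> tauto

theorem adj_of_snd_succ {i : Fin h} {j j' : Fin (2 * w)} (hj : (j' : ℕ) = j + 1) :
    (cylWall h w).Adj (i, j) (i, j') := by
  refine ⟨?_, .inl (.inl ⟨rfl, hj⟩)⟩
  simp only [ne_eq, Prod.mk.injEq, true_and]
  rintro rfl
  omega

theorem adj_of_fst_succ {i i' : Fin h} {j : Fin (2 * w)} (hi : (i' : ℕ) = i + 1)
    (hij : (i : ℕ) % 2 = (j : ℕ) % 2) : (cylWall h w).Adj (i, j) (i', j) := by
  refine ⟨?_, .inl (.inr (.inr ⟨hi, rfl, hij⟩))⟩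
  simp only [ne_eq, Prod.mk.injEq, and_true]
  rintro rfl
  omega

theorem fst_eq_or_snd_eq_of_adj {a b : Fin h × Fin (2 * w)} (hab : (cylWall h w).Adj a b) :
    a.1 = b.1 ∨ a.2 = b.2 := by
  rcases adj_cases hab with h | h
  exacts [.inl h.1, .inr h.1]

/-- A neighbour of `u` is determined by whether it lies in the row of `u` and whether it lies
"after" `u` (to the right, cyclically, or below). -/
theorem ncard_neighborSet_le (u : Fin h × Fin (2 * w)) :
    ((cylWall h w).neighborSet u).ncard ≤ 4 := by
  let code : Fin h × Fin (2 * w) → Prop × Prop := fun v =>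
    (v.1 = u.1, (v.2 : ℕ) = u.2 + 1 ∨ ((u.2 : ℕ) = 2 * w - 1 ∧ (v.2 : ℕ) = 0) ∨
      (v.1 : ℕ) = u.1 + 1)
  have hinj : Set.InjOn code ((cylWall h w).neighborSet u) := by
    intro a ha b hb hab
    simp only [code, Prod.mk.injEq, eq_iff_iff, Fin.ext_iff] at hab
    have := a.2.isLt; have := b.2.isLt; have := u.2.isLt
    rcases adj_cases ha with ⟨ha1, ha2⟩ | ⟨ha1, ha2⟩ <;>
      rcases adj_cases hb with ⟨hb1, hb2⟩ | ⟨hb1, hb2⟩ <;>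
      rw [Fin.ext_iff] at ha1 hb1 <;>
      exact Prod.ext (Fin.ext (by omega)) (Fin.ext (by omega))
  calc ((cylWall h w).neighborSet u).ncard
      ≤ (Set.univ : Set (Prop × Prop)).ncard :=
        Set.ncard_le_ncard_of_injOn code (fun _ _ => trivial) hinj
    _ = 4 := by simp [Set.ncard_univ]

variable {Z : Set (Fin h × Fin (2 * w))}

theorem reachable_of_row_free {i : Fin h} (hi : ∀ z ∈ Z, z.1 ≠ i) (j j' : Fin (2 * w)) :
    ((cylWall h w).avoiding Z).Reachable (i, j) (i, j') :=
  reachable_of_reachable_succ (fun j => (i, j))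
    (fun _ _ => (adj_of_snd_succ rfl).reachable_avoiding (fun hz => hi _ hz rfl)
      (fun hz => hi _ hz rfl)) j j'

theorem reachable_in_row_of_pair_free {p : ℕ} (hp : ∀ z ∈ Z, (z.2 : ℕ) / 2 ≠ p) (i : Fin h)
    {j j' : Fin (2 * w)} (hj : (j : ℕ) / 2 = p) (hj' : (j' : ℕ) / 2 = p) :
    ((cylWall h w).avoiding Z).Reachable (i, j) (i, j') := by
  have hj_notMem : (i, j) ∉ Z := fun hz => hp _ hz hj
  have hj'_notMem : (i, j') ∉ Z := fun hz => hp _ hz hj'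
  rcases lt_trichotomy (j : ℕ) j' with hlt | heq | hgt
  · exact (adj_of_snd_succ (by omega)).reachable_avoiding hj_notMem hj'_notMem
  · rw [Fin.ext heq]
  · exact ((adj_of_snd_succ (by omega)).reachable_avoiding hj'_notMem hj_notMem).symm

/-- Climbing inside a free column pair: of its two columns, one carries the vertical edge
between any two consecutive rows. -/
theorem reachable_of_pair_free {p : ℕ} (hp : ∀ z ∈ Z, (z.2 : ℕ) / 2 ≠ p) (i i' : Fin h)
    {j j' : Fin (2 * w)} (hj : (j : ℕ) / 2 = p) (hj' : (j' : ℕ) / 2 = p) :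
    ((cylWall h w).avoiding Z).Reachable (i, j) (i', j') := by
  refine (reachable_of_reachable_succ (fun r => (r, j)) (fun r _ => ?_) i i').trans
    (reachable_in_row_of_pair_free hp i' hj hj')
  obtain ⟨c, hc, hcr⟩ : ∃ c : Fin (2 * w), (c : ℕ) / 2 = p ∧ (c : ℕ) % 2 = r % 2 :=
    ⟨⟨2 * p + r % 2, by omega⟩, by simp only; omega⟩
  have hc_notMem : ∀ r' : Fin h, (r', c) ∉ Z := fun _ hz => hp _ hz hc
  exact (reachable_in_row_of_pair_free hp _ hj hc).trans <|
    ((adj_of_fst_succ rfl hcr.symm).reachable_avoiding (hc_notMem _) (hc_notMem _)).trans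
    (reachable_in_row_of_pair_free hp _ hc hj)

theorem reachable_of_row_free_or_pair_free {i₀ : Fin h} {j₀ : Fin (2 * w)}
    (hi₀ : ∀ z ∈ Z, z.1 ≠ i₀) (hj₀ : ∀ z ∈ Z, (z.2 : ℕ) / 2 ≠ (j₀ : ℕ) / 2)
    {u : Fin h × Fin (2 * w)}
    (hu : (∀ z ∈ Z, z.1 ≠ u.1) ∨ ∀ z ∈ Z, (z.2 : ℕ) / 2 ≠ (u.2 : ℕ) / 2) :
    ((cylWall h w).avoiding Z).Reachable u (i₀, j₀) := by
  rcases hu with hu | hu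
  · exact (reachable_of_row_free hu u.2 j₀).trans (reachable_of_pair_free hj₀ _ _ rfl rfl)
  · exact (reachable_of_pair_free hu u.1 i₀ rfl rfl).trans (reachable_of_row_free hi₀ u.2 j₀)

theorem exists_row_free (hZ : Z.ncard < h) : ∃ i : Fin h, ∀ z ∈ Z, z.1 ≠ i := by
  obtain ⟨i, -, hi⟩ :=
    exists_forall_ne_of_ncard_lt (Z := Z) Prod.fst (t := Set.univ) (by simpa using hZ)
  exact ⟨i, hi⟩

theorem exists_pair_free (hZ : Z.ncard < w) :
    ∃ j : Fin (2 * w), ∀ z ∈ Z, (z.2 : ℕ) / 2 ≠ (j : ℕ) / 2 := by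
  obtain ⟨p, hpw, hp⟩ := exists_forall_ne_of_ncard_lt (Z := Z) (fun z => (z.2 : ℕ) / 2)
    (t := Set.Iio w) (by simpa using hZ)
  refine ⟨⟨2 * p, by simp at hpw; omega⟩, fun z hz => ?_⟩
  simpa using hp z hz

theorem fst_eq_or_snd_eq_of_mem_ends {v : Fin h × Fin (2 * w) ⊕ (cylWall h w).edgeSet}
    {a b : Fin h × Fin (2 * w)} (ha : a ∈ ends _ v) (hb : b ∈ ends _ v) :
    a.1 = b.1 ∨ a.2 = b.2 := by
  rcases v with u | ⟨e, he⟩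
  · obtain rfl : a = u := ha
    obtain rfl : b = a := hb
    exact .inl rfl
  · induction e using Sym2.ind with
    | _ x y =>
      have hxy := fst_eq_or_snd_eq_of_adj he
      simp only [ends, Set.mem_ofPred_eq, Sym2.mem_iff] at ha hb
      rcases ha with rfl | rfl <;> rcases hb with rfl | rfl <;> grind

def blocked (Z : Set (Fin h × Fin (2 * w))) :
    Set (Fin h × Fin (2 * w) ⊕ (cylWall h w).edgeSet) :=
  {v | (∃ u ∈ ends _ v, ∃ z ∈ Z, z.1 = u.1) ∧
    ∃ u ∈ ends _ v, ∃ z ∈ Z, (z.2 : ℕ) / 2 = (u.2 : ℕ) / 2}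

theorem ncard_blocked_le (Z : Set (Fin h × Fin (2 * w))) :
    (blocked Z).ncard ≤ 10 * Z.ncard ^ 2 := by
  set core := {u : Fin h × Fin (2 * w) |
    (∃ z ∈ Z, z.1 = u.1) ∧ ∃ z ∈ Z, (z.2 : ℕ) / 2 = (u.2 : ℕ) / 2}
  have hsub : blocked Z ⊆ {v | ∃ u ∈ ends _ v, u ∈ core} := by
    rintro v ⟨⟨a, ha, hza⟩, ⟨b, hb, hzb⟩⟩
    rcases fst_eq_or_snd_eq_of_mem_ends ha hb with hab | hab
    · exact ⟨b, hb, hab ▸ hza, hzb⟩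
    · exact ⟨a, ha, hza, hab ▸ hzb⟩
  have hcore : core.ncard ≤ 2 * Z.ncard ^ 2 := by
    have hmaps : ∀ u ∈ core, (u.1, (u.2 : ℕ) / 2, (u.2 : ℕ) % 2) ∈
        (Prod.fst '' Z) ×ˢ ((fun z => (z.2 : ℕ) / 2) '' Z) ×ˢ Set.Iio 2 :=
      fun u ⟨hrow, hpair⟩ => ⟨hrow, hpair, Nat.mod_lt _ two_pos⟩
    have hinj : Set.InjOn (fun u : Fin h × Fin (2 * w) => (u.1, (u.2 : ℕ) / 2, (u.2 : ℕ) % 2))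
        core := by
      intro a _ b _ hab
      simp only [Prod.mk.injEq] at hab
      exact Prod.ext hab.1 (Fin.ext (by omega))
    calc core.ncard ≤ _ := Set.ncard_le_ncard_of_injOn _ hmaps hinj
      _ ≤ Z.ncard * (Z.ncard * 2) := by
        simp only [Set.ncard_prod, Set.ncard_Iio_nat]
        gcongr <;> exact Set.ncard_image_le
      _ = 2 * Z.ncard ^ 2 := by ring
  calc (blocked Z).ncard ≤ _ := Set.ncard_le_ncard hsub
    _ ≤ (4 + 1) * core.ncard := ncard_setOf_exists_mem_ends_le ncard_neighborSet_le core
    _ ≤ 10 * Z.ncard ^ 2 := by omega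

theorem reachable_of_notMem_blocked {S : Set (Fin h × Fin (2 * w) ⊕ (cylWall h w).edgeSet)}
    {i₀ : Fin h} {j₀ : Fin (2 * w)} (hi₀ : ∀ z ∈ shadow _ S, z.1 ≠ i₀)
    (hj₀ : ∀ z ∈ shadow _ S, (z.2 : ℕ) / 2 ≠ (j₀ : ℕ) / 2) {v : Fin h × Fin (2 * w) ⊕ _}
    (hv : v ∉ blocked (shadow _ S)) :
    ((OneSubdivision (cylWall h w)).avoiding S).Reachable v (.inl (i₀, j₀)) := by
  obtain ⟨u, hu⟩ := ends_nonempty v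
  have hfree : (∀ z ∈ shadow _ S, z.1 ≠ u.1) ∨
      ∀ z ∈ shadow _ S, (z.2 : ℕ) / 2 ≠ (u.2 : ℕ) / 2 := by
    rw [blocked, Set.mem_ofPred_eq, not_and_or] at hv
    push Not at hv
    exact hv.imp (fun hv => hv u hu) (fun hv => hv u hu)
  have huS : u ∉ shadow _ S := fun huZ => hfree.elim (· u huZ rfl) (· u huZ rfl)
  exact (reachable_inl_of_mem_ends hu huS).trans
    (reachable_inl_inl (reachable_of_row_free_or_pair_free hi₀ hj₀ hfree))

end cylWall

open OneSubdivision cylWall in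
/-- The 1-subdivision of the elementary cylindrical wall of height `k` and width `k`
is `(100ℓ², ℓ)`-unbreakable whenever `10ℓ ≤ k`. -/
theorem subdivided_cylWall_unbreakable (k ℓ : ℕ) (hk : 1 ≤ k) (hℓ : 10 * ℓ ≤ k) :
    Unbreakable (OneSubdivision (cylWall k k)) (100 * ℓ ^ 2) ℓ := by
  refine unbreakable_of_reachable_outside fun S hS => ?_
  have hZ : (shadow _ S).ncard ≤ 2 * ℓ := (ncard_shadow_le S.toFinite).trans (by omega)
  obtain ⟨i₀, hi₀⟩ := exists_row_free (hZ.trans_lt (by omega))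
  obtain ⟨j₀, hj₀⟩ := exists_pair_free (hZ.trans_lt (by omega))
  refine ⟨blocked (shadow _ S), ?_, fun a ha b hb => ?_⟩
  · calc (blocked (shadow _ S)).ncard + ℓ ≤ 10 * (2 * ℓ) ^ 2 + ℓ := by
          grw [ncard_blocked_le, hZ]
      _ ≤ 100 * ℓ ^ 2 := by nlinarith
  · exact (reachable_of_notMem_blocked hi₀ hj₀ ha).trans
      (reachable_of_notMem_blocked hi₀ hj₀ hb).symm
end

section
/- Let q, k ≥ 0 be integers and let G be a finite simple graph that is (q,k)-unbreakable and satisfies |V(G)| > 3q. Then the set 𝒯 of all separations (A,B) of G of order at most k with |A| ≤ q is a tangle of order k+1 in G. -/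
lemma IsSeparation.symm {V : Type*} {G : SimpleGraph V} {A B : Set V}
    (h : IsSeparation G A B) : IsSeparation G B A := by
  refine ⟨by rw [Set.union_comm]; exact h.1, fun u v huv hu hv => ?_⟩
  exact h.2 huv.symm hv hu

/-- If `G` is `(q,k)`-unbreakable with more than `3q` vertices, then the separations
`(A,B)` of order at most `k` with `|A| ≤ q` form a tangle of order `k + 1`. -/
theorem unbreakability_tangle {V : Type*} [Fintype V] (G : SimpleGraph V) (q k : ℕ)
    (hG : Unbreakable G q k) (hcard : 3 * q < Fintype.card V) :
    IsTangle G (k + 1)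
      {p : Set V × Set V |
        IsSeparation G p.1 p.2 ∧ (p.1 ∩ p.2).ncard ≤ k ∧ p.1.ncard ≤ q} := by
  refine ⟨fun p hp => ⟨hp.1, Nat.lt_succ_of_le hp.2.1⟩, ?_, ?_⟩
  · intro A B hsep hord
    have hord' : (A ∩ B).ncard ≤ k := Nat.lt_succ_iff.mp hord
    rcases hG A B hsep hord' with h | h
    · exact Or.inl ⟨hsep, hord', h⟩
    · exact Or.inr ⟨hsep.symm, by rwa [Set.inter_comm], h⟩
  · intro p₁ h₁ p₂ h₂ p₃ h₃ huniv
    have hfin : ∀ s : Set V, s.Finite := fun s => s.toFinite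
    have hle : (p₁.1 ∪ p₂.1 ∪ p₃.1).ncard ≤ 3 * q := by
      calc (p₁.1 ∪ p₂.1 ∪ p₃.1).ncard
          ≤ (p₁.1 ∪ p₂.1).ncard + p₃.1.ncard :=
            Set.ncard_union_le _ _
        _ ≤ p₁.1.ncard + p₂.1.ncard + p₃.1.ncard :=
            Nat.add_le_add_right (Set.ncard_union_le _ _) _
        _ ≤ q + q + q := by
            exact Nat.add_le_add (Nat.add_le_add h₁.2.2 h₂.2.2) h₃.2.2
        _ = 3 * q := by ring
    rw [huniv, Set.ncard_univ, Nat.card_eq_fintype_card] at hle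
    omega
end

section
/- Let G be a finite simple graph, let 𝒯 be a tangle of order p in G, and let X ⊆ V(G) with |X| < p. Define 𝒯 − X as the set of all separations (A,B) of the induced subgraph G − X such that (A ∪ X, B ∪ X) ∈ 𝒯. Then 𝒯 − X is a tangle of order p − |X| in G − X. -/
/-- If `T` is a tangle of order `p` in `G` and `X` is a vertex set with `|X| < p`, then
the separations `(A,B)` of `G − X` with `(A ∪ X, B ∪ X) ∈ T` form a tangle of order
`p − |X|` in `G − X`. -/
theorem tangle_delete {V : Type*} [Fintype V] (G : SimpleGraph V) (p : ℕ)
    (T : Set (Set V × Set V)) (hT : IsTangle G p T)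
    (X : Set V) (hX : X.ncard < p) :
    IsTangle (G.induce Xᶜ) (p - X.ncard)
      {q : Set ↥(Xᶜ) × Set ↥(Xᶜ) |
        IsSeparation (G.induce Xᶜ) q.1 q.2 ∧
          ((Subtype.val '' q.1) ∪ X, (Subtype.val '' q.2) ∪ X) ∈ T} := by
  obtain ⟨hT1, hT2, hT3⟩ := hT
  have hinj : Function.Injective (Subtype.val : ↥(Xᶜ) → V) := Subtype.val_injective
  have hcard : ∀ A B : Set ↥(Xᶜ),
      ((Subtype.val '' A ∪ X) ∩ (Subtype.val '' B ∪ X)).ncard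
        = (A ∩ B).ncard + X.ncard := by
    intro A B
    have h1 : (Subtype.val '' A ∪ X) ∩ (Subtype.val '' B ∪ X)
        = (Subtype.val '' (A ∩ B)) ∪ X := by
      rw [Set.image_inter hinj]
      ext v
      simp only [Set.mem_inter_iff, Set.mem_union]
      constructor
      · rintro ⟨ha | hx, hb | hx'⟩
        · exact Or.inl ⟨ha, hb⟩
        · exact Or.inr hx'
        · exact Or.inr hx
        · exact Or.inr hx
      · rintro (⟨ha, hb⟩ | hx)
        · exact ⟨Or.inl ha, Or.inl hb⟩
        · exact ⟨Or.inr hx, Or.inr hx⟩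
    have hdisj : Disjoint (Subtype.val '' (A ∩ B)) X := by
      rw [Set.disjoint_left]
      rintro v ⟨u, _, rfl⟩
      exact u.2
    rw [h1, Set.ncard_union_eq hdisj (Set.toFinite _) (Set.toFinite _),
      Set.ncard_image_of_injective _ hinj]
  have hsymm : ∀ A B : Set ↥(Xᶜ), IsSeparation (G.induce Xᶜ) A B →
      IsSeparation (G.induce Xᶜ) B A := by
    rintro A B ⟨hun, hedge⟩
    refine ⟨by rw [Set.union_comm]; exact hun, ?_⟩
    intro u v hadj hu hv
    exact hedge hadj.symm hv hu
  refine ⟨?_, ?_, ?_⟩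
  · rintro q ⟨hsep, hmem⟩
    refine ⟨hsep, ?_⟩
    have := (hT1 _ hmem).2
    rw [hcard] at this
    omega
  · intro A B hsep hord
    -- build separation (A' ∪ X, B' ∪ X) of G
    have hsepG : IsSeparation G (Subtype.val '' A ∪ X) (Subtype.val '' B ∪ X) := by
      constructor
      · ext v
        simp only [Set.mem_union, Set.mem_univ, iff_true]
        by_cases hv : v ∈ X
        · exact Or.inl (Or.inr hv)
        · have : (⟨v, hv⟩ : ↥(Xᶜ)) ∈ A ∪ B := hsep.1 ▸ Set.mem_univ _
          rcases this with h | h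
          · exact Or.inl (Or.inl ⟨⟨v, hv⟩, h, rfl⟩)
          · exact Or.inr (Or.inl ⟨⟨v, hv⟩, h, rfl⟩)
      · rintro u v hadj ⟨hu1, hu2⟩ ⟨hv1, hv2⟩
        have hux : u ∉ X := fun h => hu2 (Or.inr h)
        have hvx : v ∉ X := fun h => hv2 (Or.inr h)
        have huA : (⟨u, hux⟩ : ↥(Xᶜ)) ∈ A := by
          rcases hu1 with ⟨w, hw, hwe⟩ | h
          · obtain rfl : w = ⟨u, hux⟩ := Subtype.ext hwe
            exact hw
          · exact absurd h hux
        have hvB : (⟨v, hvx⟩ : ↥(Xᶜ)) ∈ B := by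
          rcases hv1 with ⟨w, hw, hwe⟩ | h
          · obtain rfl : w = ⟨v, hvx⟩ := Subtype.ext hwe
            exact hw
          · exact absurd h hvx
        have huB : (⟨u, hux⟩ : ↥(Xᶜ)) ∉ B := fun h => hu2 (Or.inl ⟨_, h, rfl⟩)
        have hvA : (⟨v, hvx⟩ : ↥(Xᶜ)) ∉ A := fun h => hv2 (Or.inl ⟨_, h, rfl⟩)
        have hadj' : (G.induce Xᶜ).Adj ⟨u, hux⟩ ⟨v, hvx⟩ := hadj
        exact hsep.2 hadj' ⟨huA, huB⟩ ⟨hvB, hvA⟩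
    have hordG : ((Subtype.val '' A ∪ X) ∩ (Subtype.val '' B ∪ X)).ncard < p := by
      rw [hcard]; omega
    rcases hT2 _ _ hsepG hordG with h | h
    · exact Or.inl ⟨hsep, h⟩
    · exact Or.inr ⟨hsymm _ _ hsep, h⟩
  · rintro q₁ ⟨_, h₁⟩ q₂ ⟨_, h₂⟩ q₃ ⟨_, h₃⟩ huniv
    refine hT3 _ h₁ _ h₂ _ h₃ ?_
    ext v
    simp only [Set.mem_union, Set.mem_univ, iff_true]
    by_cases hv : v ∈ X
    · exact Or.inl (Or.inl (Or.inr hv))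
    · have : (⟨v, hv⟩ : ↥(Xᶜ)) ∈ q₁.1 ∪ q₂.1 ∪ q₃.1 := huniv ▸ Set.mem_univ _
      rcases this with (h | h) | h
      · exact Or.inl (Or.inl (Or.inl ⟨_, h, rfl⟩))
      · exact Or.inl (Or.inr (Or.inl ⟨_, h, rfl⟩))
      · exact Or.inr (Or.inl ⟨_, h, rfl⟩)
end
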